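/- arXiv:2511.09380 — 6 statements merged into one kernel-verified Lean document; each statement's English description precedes it below -/
import Mathlib

section
/- For positive integers m and n with n ≥ 2m-1, the set of Bott matrices of BS type from sequences in [n]^m equals the set of Bott matrices of BS type from sequences in [2m-1]^m; that is, B(n,m) = B(2m-1,m). -/
/-- The Bott matrix of BS type associated to a sequence `i`. -/
def bottMatrix (m : ℕ) (i : Fin m → ℤ) : Matrix (Fin m) (Fin m) ℤ :=
  fun j k =>
    if j = k then -1
    else if k < j then
      (if i j = i k then -2 else if |i j - i k| = 1 then 1 else 0)
    else 0

/-- The set `B(n,m)` of Bott matrices of BS type arising from sequences in `[n]^m`. -/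
def BSet (n m : ℕ) : Set (Matrix (Fin m) (Fin m) ℤ) :=
  {B | ∃ i : Fin m → ℤ, (∀ t, i t ∈ Finset.Icc (1 : ℤ) n) ∧ B = bottMatrix m i}

/-! A Bott matrix only records which entries of the sequence are equal and which differ by `1`.
Relabelling the set `s` of values so that each gap between consecutive values becomes `1` if it
was `1` and `2` otherwise keeps this information and sends `s` into `[1, 2 * #s - 1]`. -/

open Finset

def compressGaps (s : Finset ℤ) (v : ℤ) : ℤ :=
  1 + ∑ y ∈ s with y < v, if y + 1 ∈ s then 1 else 2

lemma bottMatrix_congr {m : ℕ} {i i' : Fin m → ℤ}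
    (heq : ∀ j k, i' j = i' k ↔ i j = i k)
    (hadj : ∀ j k, |i' j - i' k| = 1 ↔ |i j - i k| = 1) :
    bottMatrix m i' = bottMatrix m i := by
  ext j k
  simp only [bottMatrix, heq, hadj]

namespace compressGaps

variable {s : Finset ℤ} {v v' : ℤ}

lemma sub_eq_sum (h : v ≤ v') :
    compressGaps s v' - compressGaps s v =
      ∑ y ∈ s with v ≤ y ∧ y < v', if y + 1 ∈ s then 1 else 2 := by
  have hlow : {y ∈ {y ∈ s | y < v'} | y < v} = {y ∈ s | y < v} := by
    rw [filter_filter]; exact filter_congr fun y _ => by omega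
  have hhigh : {y ∈ {y ∈ s | y < v'} | ¬y < v} = {y ∈ s | v ≤ y ∧ y < v'} := by
    rw [filter_filter]; exact filter_congr fun y _ => by omega
  rw [compressGaps, compressGaps, ← sum_filter_add_sum_filter_not _ (· < v), hlow, hhigh]
  ring

lemma add_one (hv : v ∈ s) (hv1 : v + 1 ∈ s) :
    compressGaps s (v + 1) = compressGaps s v + 1 := by
  have hsingle : {y ∈ s | v ≤ y ∧ y < v + 1} = {v} := by
    ext y; simp only [mem_filter, mem_singleton]; constructor
    · omega
    · rintro rfl; exact ⟨hv, by omega⟩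
  have := sub_eq_sum (s := s) (le_add_of_nonneg_right zero_le_one : v ≤ v + 1)
  rw [hsingle, sum_singleton, if_pos hv1] at this
  omega

lemma add_two_le (hv : v ∈ s) (h : v + 1 < v') :
    compressGaps s v + 2 ≤ compressGaps s v' := by
  have hsum := sub_eq_sum (s := s) (by omega : v ≤ v')
  have hpos : ∀ y ∈ {y ∈ s | v ≤ y ∧ y < v'}, (0 : ℤ) ≤ if y + 1 ∈ s then 1 else 2 := by
    intro y _; split_ifs <;> norm_num
  by_cases hv1 : v + 1 ∈ s
  · have hsub : {v, v + 1} ⊆ {y ∈ s | v ≤ y ∧ y < v'} := by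
      intro y hy
      simp only [mem_insert, mem_singleton] at hy
      rcases hy with rfl | rfl <;> exact mem_filter.2 ⟨by assumption, by omega, by omega⟩
    have := sum_le_sum_of_subset_of_nonneg hsub fun y hy _ => hpos y hy
    rw [sum_pair (by omega), if_pos hv1] at this
    have : (1 : ℤ) ≤ if v + 1 + 1 ∈ s then 1 else 2 := by split_ifs <;> norm_num
    omega
  · have := single_le_sum hpos (mem_filter.2 ⟨hv, le_rfl, by omega⟩)
    rw [if_neg hv1] at this
    omega

lemma mem_Icc (hv : v ∈ s) : compressGaps s v ∈ Icc 1 (2 * #s - 1 : ℤ) := by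
  have hlt : #{y ∈ s | y < v} < #s :=
    card_lt_card (filter_ssubset.2 ⟨v, hv, lt_irrefl v⟩)
  have hle : ∑ y ∈ s with y < v, (if y + 1 ∈ s then 1 else 2 : ℤ) ≤ #{y ∈ s | y < v} • 2 :=
    sum_le_card_nsmul _ _ _ fun y _ => by split_ifs <;> norm_num
  have hnonneg : 0 ≤ ∑ y ∈ s with y < v, (if y + 1 ∈ s then 1 else 2 : ℤ) :=
    sum_nonneg fun y _ => by split_ifs <;> norm_num
  rw [nsmul_eq_mul] at hle
  rw [Finset.mem_Icc, compressGaps]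
  constructor <;> omega

lemma strictMonoOn : StrictMonoOn (compressGaps s) s := by
  intro v hv v' hv' h
  rcases (Int.add_one_le_iff.2 h).eq_or_lt with rfl | h
  · linarith [add_one hv hv']
  · linarith [add_two_le hv h]

lemma abs_sub_eq_one_iff (hv : v ∈ s) (hv' : v' ∈ s) :
    |compressGaps s v - compressGaps s v'| = 1 ↔ |v - v'| = 1 := by
  wlog h : v ≤ v' generalizing v v'
  · rw [abs_sub_comm, abs_sub_comm v]; exact this hv' hv (by omega)
  rw [abs_sub_comm, abs_sub_comm v, abs_of_nonneg (sub_nonneg.2 h),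
    abs_of_nonneg (sub_nonneg.2 (strictMonoOn.monotoneOn hv hv' h))]
  rcases h.eq_or_lt with rfl | h
  · simp
  rcases (Int.add_one_le_iff.2 h).eq_or_lt with rfl | h
  · rw [add_one hv hv']; simp
  · have := add_two_le hv h; omega

end compressGaps

lemma bottMatrix_mem_BSet (m : ℕ) (i : Fin m → ℤ) : bottMatrix m i ∈ BSet (2 * m - 1) m := by
  set s := univ.image i
  have hmem (t : Fin m) : i t ∈ s := mem_image_of_mem i (mem_univ t)
  have hcard : #s ≤ m := card_image_le.trans_eq (card_fin m)
  refine ⟨compressGaps s ∘ i, fun t => ?_, (bottMatrix_congr (fun j k => ?_) (fun j k => ?_)).symm⟩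
  · have := compressGaps.mem_Icc (hmem t)
    simp only [Function.comp_apply, Finset.mem_Icc] at this ⊢
    omega
  · exact compressGaps.strictMonoOn.injOn.eq_iff (hmem j) (hmem k)
  · exact compressGaps.abs_sub_eq_one_iff (hmem j) (hmem k)

lemma BSet_mono {n n' : ℕ} (m : ℕ) (h : n ≤ n') : BSet n m ⊆ BSet n' m := by
  rintro _ ⟨i, hi, rfl⟩
  refine ⟨i, fun t => ?_, rfl⟩
  have := hi t
  simp only [Finset.mem_Icc] at this ⊢
  omega

theorem BSet_stabilizes_general (n m : ℕ)
    (h : 2 * m - 1 ≤ n) :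
    BSet n m = BSet (2 * m - 1) m :=
  (BSet_mono m h).antisymm' fun _ ⟨i, _, hB⟩ => hB ▸ bottMatrix_mem_BSet m i

/-- for `n ≥ 2m - 1`, `B(n,m) = B(2m-1,m)`. -/
theorem BSet_stabilizes (n m : ℕ) (hm : 0 < m) (hn : 0 < n)
    (h : 2 * m - 1 ≤ n) :
    BSet n m = BSet (2 * m - 1) m :=
  BSet_stabilizes_general n m h
end

section
/- Let B be an m×m lower triangular integer matrix with all diagonal entries equal to -1, let J_B = {j ∈ [m] : there exists k < j with B_{j,k} ≠ 0}, and let I ⊆ [m] with J_B ⊆ I. Define L_I as the matrix whose j-th column is the standard basis vector e_j if j ∈ I and the j-th column of B if j ∉ I. Then L_I² is the identity matrix. -/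
/-!
Let `P` be the diagonal projection onto the coordinates in `I` and `Q = 1 - P`. A row `l ∉ I`
of `B` is `-eₗᵀ`: entries right of the diagonal vanish since `B` is lower triangular, those left
of it since `l ∉ J_B`. Hence `L_I = P - Q + P B Q`, and for complementary idempotents `P`, `Q`
one has `(P - Q)² = 1`, `(P - Q) P B Q = P B Q = -(P B Q (P - Q))` and `(P B Q)² = 0`,
so `L_I² = 1`.
-/

/-- For a matrix `B` and a set `I` of column indices, `LI B I` is the matrix whose
`j`-th column is the standard basis vector `e_j` if `j ∈ I`, and the `j`-th column
of `B` otherwise. -/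
def LI (m : ℕ) (B : Matrix (Fin m) (Fin m) ℤ) (I : Finset (Fin m)) :
    Matrix (Fin m) (Fin m) ℤ :=
  fun j k => if k ∈ I then (if j = k then 1 else 0) else B j k

open Matrix

theorem IsIdempotentElem.sub_one_sub_add_mul_mul_one_sub_mul_self {R : Type*} [Ring R] {p : R}
    (hp : IsIdempotentElem p) (b : R) :
    (p - (1 - p) + p * b * (1 - p)) * (p - (1 - p) + p * b * (1 - p)) = 1 := by
  set q := 1 - p with hq_def
  have hpq : p * q = 0 := by rw [hq_def, mul_sub, mul_one, hp.eq, sub_self]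
  have hqp : q * p = 0 := by rw [hq_def, sub_mul, one_mul, hp.eq, sub_self]
  have hqq : q * q = q := hp.one_sub.eq
  calc (p - q + p * b * q) * (p - q + p * b * q)
      = p * p - p * q - q * p + q * q + (p * p * b * q - q * p * b * q)
        + (p * b * q * p - p * b * q * q) + p * b * (q * p) * b * q := by noncomm_ring
    _ = p + q := by
      simp only [hp.eq, hpq, hqp, hqq, mul_assoc, mul_zero, zero_mul]
      abel
    _ = 1 := add_sub_cancel p 1

theorem Matrix.apply_eq_neg_one_apply_of_notMem {n R : Type*} [LinearOrder n] [Ring R]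
    {B : Matrix n n R} (hlower : ∀ j k, j < k → B j k = 0) (hdiag : ∀ j, B j j = -1)
    {I : Set n} (hJ : ∀ j, (∃ k, k < j ∧ B j k ≠ 0) → j ∈ I) {l : n} (hl : l ∉ I) (k : n) :
    B l k = -(1 : Matrix n n R) l k := by
  rcases lt_trichotomy l k with hlk | rfl | hkl
  · rw [hlower l k hlk, one_apply_ne hlk.ne, neg_zero]
  · rw [hdiag, one_apply_eq]
  · rw [one_apply_ne hkl.ne', neg_zero]
    by_contra hne
    exact hl (hJ l ⟨k, hkl, hne⟩)

def coordProj {n : Type*} [DecidableEq n] (R : Type*) [Zero R] [One R] (I : Finset n) :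
    Matrix n n R :=
  diagonal fun i => if i ∈ I then 1 else 0

theorem isIdempotentElem_coordProj {n R : Type*} [Fintype n] [DecidableEq n] [Semiring R]
    (I : Finset n) : IsIdempotentElem (coordProj R I) := by
  rw [IsIdempotentElem, coordProj, diagonal_mul_diagonal]
  congr 1
  ext i
  split_ifs <;> simp

theorem one_sub_coordProj {n R : Type*} [DecidableEq n] [Ring R] (I : Finset n) :
    1 - coordProj R I = diagonal fun i => if i ∈ I then 0 else 1 := by
  rw [coordProj, ← diagonal_one, diagonal_sub]
  congr 1
  ext i
  split_ifs <;> simp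

theorem LI_eq_coordProj_sub_add {m : ℕ} {B : Matrix (Fin m) (Fin m) ℤ} {I : Finset (Fin m)}
    (hB : ∀ l ∉ I, ∀ k, B l k = -(1 : Matrix (Fin m) (Fin m) ℤ) l k) :
    LI m B I = coordProj ℤ I - (1 - coordProj ℤ I) + coordProj ℤ I * B * (1 - coordProj ℤ I) := by
  rw [one_sub_coordProj, coordProj]
  ext j k
  simp only [LI, Matrix.add_apply, Matrix.sub_apply, diagonal_mul, mul_diagonal, diagonal_apply]
  obtain rfl | hjk := eq_or_ne j k
  · by_cases hj : j ∈ I <;> simp [hj, hB]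
  · by_cases hj : j ∈ I <;> by_cases hk : k ∈ I <;> simp [hj, hk, hjk, hB]

/-- if `B` is lower triangular with diagonal entries `-1` and
`J_B ⊆ I`, then `L_I² = 1`. -/
theorem LI_sq_eq_one (m : ℕ) (B : Matrix (Fin m) (Fin m) ℤ)
    (hlower : ∀ j k : Fin m, j < k → B j k = 0)
    (hdiag : ∀ j, B j j = -1)
    (I : Finset (Fin m))
    (hJ : ∀ j : Fin m, (∃ k, k < j ∧ B j k ≠ 0) → j ∈ I) :
    LI m B I * LI m B I = 1 := by
  rw [LI_eq_coordProj_sub_add fun l hl =>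
    B.apply_eq_neg_one_apply_of_notMem hlower hdiag (I := ↑I) hJ hl]
  exact (isIdempotentElem_coordProj I).sub_one_sub_add_mul_mul_one_sub_mul_self B
end

section
/- Let B be an m×m lower triangular integer matrix with all diagonal entries equal to -1, let J_B = {j ∈ [m] : there exists k < j with B_{j,k} ≠ 0}, and let I ⊆ [m] with J_B ⊆ I. Define L_I as the matrix whose j-th column is e_j if j ∈ I and the j-th column of B otherwise, and L_{I^c} analogously with I replaced by its complement. Then L_I⁻¹ · L_{I^c} = B. -/
/-!
Since `J_B ⊆ I`, every row of `B` outside `I` is `-e_j`, i.e. the rows of `B + 1` indexed by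
`Iᶜ` vanish, while the columns of `L_I - 1` indexed by `I` vanish. Hence
`(L_I - 1) (B + 1) = 0`, and together with `L_I + L_{Iᶜ} = B + 1` this gives `L_I B = L_{Iᶜ}`.
Finally `L_I` is lower triangular with diagonal entries `±1`, so it is invertible.
-/

theorem Matrix.add_one_row_eq_zero_of_isLowerTriangular {n R : Type*} [LinearOrder n] [Ring R]
    {B : Matrix n n R} (hB : B.IsLowerTriangular) {j : n} (hjj : B j j = -1)
    (hj : ∀ k < j, B j k = 0) : (B + 1) j = 0 := by
  ext k
  rcases lt_trichotomy j k with h | rfl | h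
  · simp [hB h, Matrix.one_apply_ne h.ne]
  · simp [hjj]
  · simp [hj k h, Matrix.one_apply_ne h.ne']

namespace LI

variable {m : ℕ} {B : Matrix (Fin m) (Fin m) ℤ} {I : Finset (Fin m)}

variable (m B I) in
theorem add_compl :
    LI m B I + LI m B Iᶜ = B + 1 := by
  ext j k
  by_cases hk : k ∈ I <;> simp [LI, hk, Matrix.one_apply, add_comm]

theorem sub_one_mul_add_one_eq_zero (hrow : ∀ l ∉ I, (B + 1) l = 0) :
    (LI m B I - 1) * (B + 1) = 0 := by
  ext j k
  rw [Matrix.mul_apply, Matrix.zero_apply]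
  refine Finset.sum_eq_zero fun l _ => ?_
  by_cases hl : l ∈ I
  · simp [LI, hl, Matrix.one_apply]
  · rw [hrow l hl, Pi.zero_apply, mul_zero]

theorem mul_eq_compl (hrow : ∀ l ∉ I, (B + 1) l = 0) :
    LI m B I * B = LI m B Iᶜ := by
  have h := sub_one_mul_add_one_eq_zero hrow
  rw [sub_mul, one_mul, sub_eq_zero, mul_add, mul_one] at h
  linear_combination (norm := abel) h - add_compl m B I

theorem isLowerTriangular (hB : B.IsLowerTriangular) : (LI m B I).IsLowerTriangular :=
  fun j k (hjk : j < k) => by simp [LI, hjk.ne, hB hjk]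

theorem isUnit_det (hB : B.IsLowerTriangular) (hdiag : ∀ j, B j j = -1) :
    IsUnit (LI m B I).det := by
  rw [Matrix.det_of_isLowerTriangular _ (isLowerTriangular hB), IsUnit.prod_univ_iff]
  intro i
  by_cases hi : i ∈ I <;> simp [LI, hi, hdiag i]

end LI

/-- if `B` is a Bott matrix (lower triangular with diagonal `-1`)
and `J_B ⊆ I`, then `L_I⁻¹ * L_{Iᶜ} = B`. -/
theorem LI_inv_mul_LIc (m : ℕ) (B : Matrix (Fin m) (Fin m) ℤ)
    (hlower : ∀ j k : Fin m, j < k → B j k = 0)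
    (hdiag : ∀ j, B j j = -1)
    (I : Finset (Fin m))
    (hJ : ∀ j : Fin m, (∃ k, k < j ∧ B j k ≠ 0) → j ∈ I) :
    (LI m B I)⁻¹ * LI m B Iᶜ = B := by
  have hB : B.IsLowerTriangular := fun j k hjk => hlower j k hjk
  have hrow : ∀ l ∉ I, (B + 1) l = 0 := fun l hl =>
    Matrix.add_one_row_eq_zero_of_isLowerTriangular hB (hdiag l) fun k hk => by
      by_contra hne
      exact hl (hJ l ⟨k, hk, hne⟩)
  rw [← LI.mul_eq_compl hrow, ← mul_assoc,
    Matrix.nonsing_inv_mul _ (LI.isUnit_det hB hdiag), one_mul]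
end

section
/- Let B = [b_{j,k}] be a Bott matrix of BS type (all subdiagonal entries in {-2,1,0}, diagonal entries -1), let J_B = {j : there exists k < j with b_{j,k} ≠ 0}, and suppose I ⊆ [m] does not contain J_B. Let p = min(J_B \ I) and q = min{k : b_{p,q} ≠ 0}. Then the (p,q)-entry of the matrix B_I = L_I⁻¹ L_{I^c} equals -b_{p,q}; in particular, B_I is not a Bott matrix of BS type since -b_{p,q} ∈ {2, -1}. -/
/-- A Bott matrix of BS type: lower triangular, diagonal entries `-1`, and all
entries strictly below the diagonal in `{-2, 1, 0}`. -/
def IsBSType (m : ℕ) (B : Matrix (Fin m) (Fin m) ℤ) : Prop :=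
  (∀ j k : Fin m, j < k → B j k = 0) ∧ (∀ j, B j j = -1) ∧
    (∀ j k : Fin m, k < j → B j k = -2 ∨ B j k = 1 ∨ B j k = 0)

/-!
Write `A = L_I` and let `v` be row `p` of `B` restricted to the columns `j < p` outside `I`.
By minimality of `p`, each such row `j` of `B` is `-e_j`, so row `j` of `L_I` is `-e_j` and
row `j` of `L_{Iᶜ}` is `e_j`. Hence `v A = -v` and `v L_{Iᶜ} = v`; as row `p` of `A` is
`v - e_p`, row `p` of `A⁻¹` is `-(v + e_p)`, so row `p` of `B_I` is `-(v + row p of L_{Iᶜ})`,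
whose `k`-th entry for `k < p` is `-b_{p,k}`.
-/

namespace Matrix

variable {n R : Type*} [Fintype n] [DecidableEq n]

theorem vecMul_eq_smul_of_row_eq_single [CommSemiring R] {v : n → R}
    {M : Matrix n n R} {c : R} (h : ∀ j, v j ≠ 0 → M j = Pi.single j c) :
    v ᵥ* M = c • v := by
  have hrows : ∀ j, v j • M j = v j • Pi.single j c := fun j => by
    by_cases hv : v j = 0
    · simp [hv]
    · rw [h j hv]
  ext k
  simp [vecMul_eq_sum, hrows, Finset.sum_apply, Pi.single_apply, mul_comm]

theorem row_inv_mul_eq_of_vecMul_eq_single [CommRing R] {A : Matrix n n R} (hA : IsUnit A.det)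
    {r : n → R} {p : n} (hr : r ᵥ* A = Pi.single p 1) (C : Matrix n n R) :
    (A⁻¹ * C) p = r ᵥ* C :=
  calc (A⁻¹ * C) p = Pi.single p 1 ᵥ* (A⁻¹ * C) := (single_one_vecMul p _).symm
    _ = r ᵥ* C := by
      rw [← hr, vecMul_vecMul, ← Matrix.mul_assoc, mul_nonsing_inv A hA, Matrix.one_mul]

end Matrix

open Matrix

section LI

variable {m : ℕ} {B : Matrix (Fin m) (Fin m) ℤ} {I : Finset (Fin m)}

theorem isLowerTriangular_LI (hB : B.IsLowerTriangular) : (LI m B I).IsLowerTriangular :=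
  fun j k hjk => by
    have hne : j ≠ k := (OrderDual.toDual_lt_toDual.mp hjk).ne
    simp only [LI, hB hjk, hne, ite_false, ite_self]

theorem isUnit_det_LI (hB : B.IsLowerTriangular) (hdiag : ∀ j, IsUnit (B j j)) :
    IsUnit (LI m B I).det := by
  rw [det_of_isLowerTriangular _ (isLowerTriangular_LI hB), IsUnit.prod_univ_iff]
  intro j
  by_cases hj : j ∈ I <;> simp [LI, hj, hdiag]

theorem LI_row_of_row_eq_single {j : Fin m} {c : ℤ} (hj : B j = Pi.single j c) :
    LI m B I j = Pi.single j (if j ∈ I then 1 else c) := by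
  ext k
  by_cases hk : k ∈ I <;> by_cases hjk : j = k
  all_goals simp_all [LI, eq_comm]

theorem row_eq_single_of_forall_lt (hB : B.IsLowerTriangular) {j : Fin m}
    (hj : ∀ k < j, B j k = 0) : B j = Pi.single j (B j j) := by
  ext k
  rcases lt_trichotomy k j with h | rfl | h
  · simp [hj k h, h.ne]
  · simp
  · simp [hB h, h.ne']

theorem LI_inv_mul_LI_compl_apply_of_lt (hB : B.IsLowerTriangular) (hdiag : ∀ j, B j j = -1)
    {p : Fin m} (hpI : p ∉ I) (hrows : ∀ j, j ∉ I → j < p → B j = Pi.single j (-1))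
    {k : Fin m} (hk : k < p) :
    ((LI m B I)⁻¹ * LI m B Iᶜ) p k = -B p k := by
  set v := {j | j ∉ I ∧ j < p}.indicator (B p) with hv
  have hLI_row (J : Finset (Fin m)) {j} (hj : v j ≠ 0) :
      LI m B J j = Pi.single j (if j ∈ J then 1 else -1) :=
    LI_row_of_row_eq_single (hrows j (Set.mem_of_indicator_ne_zero hj).1
      (Set.mem_of_indicator_ne_zero hj).2)
  have hvA : v ᵥ* LI m B I = (-1 : ℤ) • v := vecMul_eq_smul_of_row_eq_single fun j hj => by
    rw [hLI_row I hj, if_neg (Set.mem_of_indicator_ne_zero hj).1]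
  have hvC : v ᵥ* LI m B Iᶜ = (1 : ℤ) • v := vecMul_eq_smul_of_row_eq_single fun j hj => by
    rw [hLI_row Iᶜ hj, if_pos (Finset.mem_compl.2 (Set.mem_of_indicator_ne_zero hj).1)]
  have hAp : LI m B I p = v - Pi.single p 1 := by
    ext j
    rcases lt_trichotomy j p with h | rfl | h
    · by_cases hj : j ∈ I <;> simp [LI, hv, h, h.ne', hj]
    · simp [LI, hv, hpI, hdiag]
    · by_cases hj : j ∈ I <;> simp [LI, hv, h.ne, h.not_gt, hj, hB h]
  have hr : -(v + Pi.single p 1) ᵥ* LI m B I = Pi.single p 1 := by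
    simp only [neg_vecMul, add_vecMul, hvA, single_one_vecMul, row_def, hAp]
    abel
  rw [row_inv_mul_eq_of_vecMul_eq_single (isUnit_det_LI hB fun j => by simp [hdiag]) hr,
    neg_vecMul, add_vecMul, hvC, single_one_vecMul]
  by_cases hkI : k ∈ I <;> simp [LI, hv, hk, hk.ne', hkI]

end LI

/-- if `B` is of BS type, `J_B ⊄ I`, `p = min (J_B \ I)` and
`q = min {k : b_{p,k} ≠ 0}`, then the `(p,q)`-entry of `B_I = L_I⁻¹ L_{Iᶜ}`
equals `-b_{p,q}`; in particular `B_I` is not of BS type. -/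
theorem opOne_entry_neg (m : ℕ) (B : Matrix (Fin m) (Fin m) ℤ)
    (hBS : IsBSType m B)
    (I : Finset (Fin m)) (p q : Fin m)
    (hpJ : ∃ k, k < p ∧ B p k ≠ 0) (hpI : p ∉ I)
    (hpmin : ∀ j : Fin m, (∃ k, k < j ∧ B j k ≠ 0) → j ∉ I → p ≤ j)
    (hq : B p q ≠ 0) (hqmin : ∀ k : Fin m, B p k ≠ 0 → q ≤ k) :
    ((LI m B I)⁻¹ * LI m B Iᶜ) p q = -B p q ∧
      ¬ IsBSType m ((LI m B I)⁻¹ * LI m B Iᶜ) := by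
  obtain ⟨hlow, hdiag, hsub⟩ := hBS
  have hB : B.IsLowerTriangular := fun j k hjk => hlow j k hjk
  obtain ⟨k₀, hk₀p, hk₀⟩ := hpJ
  have hqp : q < p := (hqmin k₀ hk₀).trans_lt hk₀p
  have hrows (j : Fin m) (hjI : j ∉ I) (hjp : j < p) : B j = Pi.single j (-1) := by
    rw [← hdiag j]
    refine row_eq_single_of_forall_lt hB fun k hkj => ?_
    by_contra hne
    exact (hpmin j ⟨k, hkj, hne⟩ hjI).not_gt hjp
  have hentry := LI_inv_mul_LI_compl_apply_of_lt hB hdiag hpI hrows hqp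
  refine ⟨hentry, fun ⟨_, _, hsubI⟩ => ?_⟩
  have hneg := hsubI p q hqp
  rw [hentry] at hneg
  rcases hsub p q hqp with h | h | h <;> omega
end

section
/- For every sequence i ∈ [n]^m, F(α(i)) = B_i; that is, applying the map α from sequences to assemblies of ordered partitions, followed by the map F from assemblies to Bott matrices, yields the Bott matrix of BS type associated to i. Consequently, the map F from AOP(n,m) to B(n,m) is surjective. -/
/-- An ordered partition: a list of (nonempty, pairwise disjoint) finite sets. -/
abbrev OP := List (Finset ℕ)

/-- An assembly of ordered partitions: a list of ordered partitions. -/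
abbrev Assembly := List OP

/-- The union of the blocks of an ordered partition. -/
def Uop (op : OP) : Finset ℕ := op.foldr (· ∪ ·) ∅

/-- `σ` is an assembly of ordered partitions of `[m]` with bound `n`. -/
def IsAOP (n m : ℕ) (σ : Assembly) : Prop :=
  (∀ op ∈ σ, op ≠ [] ∧ ∀ b ∈ op, b.Nonempty) ∧
  σ.flatten.Pairwise (fun s t => Disjoint s t) ∧
  σ.flatten.foldr (· ∪ ·) ∅ = Finset.Icc 1 m ∧
  σ.Pairwise (fun o₁ o₂ => (Uop o₁).min < (Uop o₂).min) ∧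
  (σ.map List.length).sum + (σ.length - 1) ≤ n

/-- `x` and `y` lie in a common block of some ordered partition of `σ`. -/
def sameBlock (σ : Assembly) (x y : ℕ) : Prop :=
  ∃ op ∈ σ, ∃ b ∈ op, x ∈ b ∧ y ∈ b

/-- `x` and `y` lie in consecutive blocks of some ordered partition of `σ`. -/
def adjBlock (σ : Assembly) (x y : ℕ) : Prop :=
  ∃ op ∈ σ, ∃ t : ℕ, t + 1 < op.length ∧
    ((x ∈ op[t]! ∧ y ∈ op[t + 1]!) ∨ (y ∈ op[t]! ∧ x ∈ op[t + 1]!))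

/-- `x` and `y` are neighbors in `σ`. -/
def Neighbor (σ : Assembly) (x y : ℕ) : Prop := sameBlock σ x y ∨ adjBlock σ x y

open Classical in
/-- The Bott matrix `F(σ)` associated to an assembly `σ` of ordered partitions of `[m]`
(the element of `[m]` corresponding to the index `j : Fin m` is `j + 1`). -/
noncomputable def FMat (m : ℕ) (σ : Assembly) : Matrix (Fin m) (Fin m) ℤ :=
  fun j k =>
    if j = k then -1
    else if k < j then
      (if sameBlock σ ((j : ℕ) + 1) ((k : ℕ) + 1) then -2
       else if adjBlock σ ((j : ℕ) + 1) ((k : ℕ) + 1) then 1 else 0)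
    else 0

/-- The set of indices (1-based) on which the sequence `i` takes the value `v`. -/
def fiberSet (m : ℕ) (i : Fin m → ℤ) (v : ℤ) : Finset ℕ :=
  (Finset.univ.filter (fun k => i k = v)).image (fun k : Fin m => (k : ℕ) + 1)

/-- Group a sorted list of integers into maximal runs of consecutive integers. -/
def groupRuns : List ℤ → List (List ℤ)
  | [] => []
  | a :: rest =>
    match groupRuns rest with
    | [] => [[a]]
    | [] :: gs => [a] :: [] :: gs
    | (b :: g) :: gs =>
        if a + 1 = b then (a :: b :: g) :: gs else [a] :: (b :: g) :: gs

/-- The map `α` sending a sequence to its assembly of ordered partitions. -/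
def alpha (m : ℕ) (i : Fin m → ℤ) : Assembly :=
  (groupRuns ((Finset.image i Finset.univ).sort (· ≤ ·))).map
    (fun run => run.map (fiberSet m i))

/-- The equivalence `∼` on assemblies: same length, and each constituent ordered
partition agrees up to reversal. -/
def SimRel (σ τ : Assembly) : Prop :=
  List.Forall₂ (fun s t => t = s ∨ t = s.reverse) σ τ

/-! Since `α(i)` has one block `fiberSet m i v` for each value `v` of `i`, two positions share a
block exactly when `i` takes the same value there. The runs of the sorted values are maximal, so
whenever `v` and `v + 1` are both values they are consecutive entries of a common run, while
consecutive entries of a run always differ by one: positions lie in consecutive blocks exactly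
when their values differ by one. These are the relations read off by `B_i`.

For surjectivity, `α(i)` reordered by minima lies in `AOP(n,m)`: its blocks partition `[m]`, and
if the sorted values `a_1 < ⋯ < a_t` of `i` form `ℓ` runs, then `t + ℓ ≤ a_t - a_1 + 2 ≤ n + 1`,
because distinct runs are separated by gaps of at least two. -/

namespace List

theorem exists_getElem!_succ_iff_exists_pair_infix {α : Type*} [Inhabited α] {l : List α}
    {P : α → α → Prop} :
    (∃ t, t + 1 < l.length ∧ P l[t]! l[t + 1]!) ↔ ∃ a b, [a, b] <:+: l ∧ P a b := by
  constructor
  · rintro ⟨t, ht, hP⟩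
    refine ⟨l[t], l[t + 1], infix_iff_getElem?.mpr ⟨t, by simp; omega, fun k hk => ?_⟩, ?_⟩
    · simp only [length_cons, length_nil] at hk
      interval_cases k <;> simp [Nat.add_comm]
    · simpa [getElem!_pos, ht, Nat.lt_of_succ_lt ht] using hP
  · rintro ⟨a, b, hab, hP⟩
    obtain ⟨t, ht, h⟩ := infix_iff_getElem?.mp hab
    have ha := h 0 (by simp)
    have hb := h 1 (by simp)
    simp only [length_cons, length_nil] at ht
    refine ⟨t, by omega, ?_⟩
    simp_all [getElem!_def, Nat.add_comm]

theorem exists_pair_infix_map_iff {α β : Type*} {f : α → β} {l : List α} {P : β → β → Prop} :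
    (∃ s t, [s, t] <:+: l.map f ∧ P s t) ↔ ∃ a b, [a, b] <:+: l ∧ P (f a) (f b) := by
  constructor
  · rintro ⟨s, t, hst, hP⟩
    obtain ⟨l', h, hl'⟩ := infix_map_iff.mp hst
    rcases l' with _ | ⟨a, _ | ⟨b, _ | _⟩⟩ <;> simp only [map_cons, map_nil, cons.injEq,
      reduceCtorEq, and_false, and_true] at hl'
    obtain ⟨rfl, rfl⟩ := hl'
    exact ⟨a, b, h, hP⟩
  · rintro ⟨a, b, h, hP⟩
    exact ⟨f a, f b, infix_map_iff.mpr ⟨[a, b], h, rfl⟩, hP⟩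

end List

section GroupRuns

theorem groupRuns_cons_head (a : ℤ) (L : List ℤ) :
    ∃ g gs, groupRuns (a :: L) = (a :: g) :: gs := by
  rw [groupRuns]
  rcases groupRuns L with _ | ⟨_ | ⟨b, g⟩, gs⟩
  · exact ⟨[], [], rfl⟩
  · exact ⟨[], _, rfl⟩
  · dsimp only
    split_ifs
    · exact ⟨b :: g, gs, rfl⟩
    · exact ⟨[], _, rfl⟩

theorem groupRuns_cons (a : ℤ) (L : List ℤ) :
    (L.head? ≠ some (a + 1) ∧ groupRuns (a :: L) = [a] :: groupRuns L) ∨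
    ∃ g gs, L.head? = some (a + 1) ∧ groupRuns L = ((a + 1) :: g) :: gs ∧
      groupRuns (a :: L) = (a :: (a + 1) :: g) :: gs := by
  rcases L with _ | ⟨b, L⟩
  · exact Or.inl ⟨by simp, rfl⟩
  obtain ⟨g, gs, h⟩ := groupRuns_cons_head b L
  rw [groupRuns, h]
  by_cases hb : a + 1 = b
  · subst hb
    exact Or.inr ⟨g, gs, rfl, rfl, if_pos rfl⟩
  · exact Or.inl ⟨by simpa [eq_comm] using hb, if_neg hb⟩

theorem flatten_groupRuns (L : List ℤ) : (groupRuns L).flatten = L := by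
  induction L with
  | nil => rfl
  | cons a L ih =>
    rcases groupRuns_cons a L with ⟨-, h⟩ | ⟨g, gs, -, hL, h⟩
    · simp [h, ih]
    · rw [h, ← ih, hL]
      rfl

theorem mem_of_mem_groupRuns {L g : List ℤ} (hg : g ∈ groupRuns L) {a : ℤ}
    (ha : a ∈ g) : a ∈ L := by
  rw [← flatten_groupRuns L]
  exact List.mem_flatten.mpr ⟨g, hg, ha⟩

theorem ne_nil_of_mem_groupRuns {L : List ℤ} : ∀ g ∈ groupRuns L, g ≠ [] := by
  induction L with
  | nil => simp [groupRuns]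
  | cons a L ih =>
    rcases groupRuns_cons a L with ⟨-, h⟩ | ⟨g, gs, -, hL, h⟩
    · simpa [h] using ih
    · rw [hL] at ih
      simpa [h] using ih

theorem isChain_of_mem_groupRuns {L : List ℤ} :
    ∀ g ∈ groupRuns L, g.IsChain (fun a b => b = a + 1) := by
  induction L with
  | nil => simp [groupRuns]
  | cons a L ih =>
    rcases groupRuns_cons a L with ⟨-, h⟩ | ⟨g, gs, -, hL, h⟩
    · simpa [h] using ih
    · rw [hL] at ih
      simp only [h, List.mem_cons, forall_eq_or_imp] at ih ⊢
      exact ⟨List.IsChain.cons_cons rfl ih.1, ih.2⟩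

theorem exists_suffix_mem_groupRuns_cons (a : ℤ) {L g : List ℤ} (hg : g ∈ groupRuns L) :
    ∃ g' ∈ groupRuns (a :: L), g <:+ g' := by
  rcases groupRuns_cons a L with ⟨-, h⟩ | ⟨g₀, gs, -, hL, h⟩
  · exact ⟨g, by simp [h, hg], List.suffix_refl g⟩
  · rw [hL, List.mem_cons] at hg
    rcases hg with rfl | hg
    · exact ⟨_, by simp [h], List.suffix_cons a _⟩
    · exact ⟨g, by simp [h, hg], List.suffix_refl g⟩

theorem exists_mem_groupRuns_pair_infix {L : List ℤ} (hL : L.Pairwise (· < ·)) {a : ℤ}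
    (ha : a ∈ L) (ha' : a + 1 ∈ L) : ∃ g ∈ groupRuns L, [a, a + 1] <:+: g := by
  induction L with
  | nil => simp at ha
  | cons c L ih =>
    rw [List.pairwise_cons] at hL
    rcases List.mem_cons.mp ha with rfl | ha
    · have hhead : L.head? = some (a + 1) := by
        rcases L with _ | ⟨b, L⟩
        · simp at ha'
        have hab := hL.1 b List.mem_cons_self
        rcases List.mem_cons.mp ha' with h | h
        · omega
        rcases List.mem_cons.mp h with rfl | h
        · rfl
        · have := (List.pairwise_cons.mp hL.2).1 _ h
          omega
      rcases groupRuns_cons a L with ⟨hne, -⟩ | ⟨g, gs, -, -, h⟩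
      · exact absurd hhead hne
      · exact ⟨_, by simp [h], (List.prefix_append [a, a + 1] g).isInfix⟩
    · have ha' : a + 1 ∈ L := by
        rcases List.mem_cons.mp ha' with h | h
        · have := hL.1 a ha
          omega
        · exact h
      obtain ⟨g, hg, hinf⟩ := ih hL.2 ha ha'
      obtain ⟨g', hg', hsuf⟩ := exists_suffix_mem_groupRuns_cons c hg
      exact ⟨g', hg', hinf.trans hsuf.isInfix⟩

theorem exists_mem_groupRuns_pair_infix_iff {L : List ℤ} (hL : L.Pairwise (· < ·)) {a b : ℤ} :
    (∃ g ∈ groupRuns L, [a, b] <:+: g) ↔ a ∈ L ∧ b = a + 1 ∧ b ∈ L := by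
  constructor
  · rintro ⟨g, hg, hab⟩
    refine ⟨mem_of_mem_groupRuns hg (hab.subset (by simp)),
      (List.isChain_pair (R := fun x y : ℤ => y = x + 1)).mp
        ((isChain_of_mem_groupRuns g hg).infix hab),
      mem_of_mem_groupRuns hg (hab.subset (by simp))⟩
  · rintro ⟨ha, rfl, hb⟩
    exact exists_mem_groupRuns_pair_infix hL ha hb

theorem length_add_length_groupRuns_le {a hi : ℤ} {L : List ℤ} (hL : (a :: L).Pairwise (· < ·))
    (hhi : ∀ x ∈ a :: L, x ≤ hi) :
    ((a :: L).length + (groupRuns (a :: L)).length : ℤ) ≤ hi - a + 2 := by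
  induction L generalizing a with
  | nil =>
    have := hhi a List.mem_cons_self
    simp only [groupRuns, List.length_singleton, Nat.cast_one]
    omega
  | cons b L ih =>
    have hab := (List.pairwise_cons.mp hL).1 b List.mem_cons_self
    have hb := ih (List.pairwise_cons.mp hL).2 (fun x hx => hhi x (List.mem_cons_of_mem a hx))
    rcases groupRuns_cons a (b :: L) with ⟨hne, h⟩ | ⟨g, gs, hhead, hL', h⟩
    · have : b ≠ a + 1 := by simpa using hne
      simp only [h, List.length_cons] at hb ⊢
      push_cast at hb ⊢
      omega
    · have : b = a + 1 := by simpa using hhead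
      simp only [h, hL', List.length_cons] at hb ⊢
      push_cast at hb ⊢
      omega

end GroupRuns

section Assembly

theorem mem_foldr_union {l : List (Finset ℕ)} {x : ℕ} :
    x ∈ l.foldr (· ∪ ·) ∅ ↔ ∃ s ∈ l, x ∈ s := by
  induction l with
  | nil => simp
  | cons a l ih => simp [ih]

theorem mem_Uop {op : OP} {x : ℕ} : x ∈ Uop op ↔ ∃ b ∈ op, x ∈ b := mem_foldr_union

theorem adjBlock_iff_exists_pair_infix {σ : Assembly} {x y : ℕ} :
    adjBlock σ x y ↔
      ∃ op ∈ σ, ∃ s t, [s, t] <:+: op ∧ (x ∈ s ∧ y ∈ t ∨ y ∈ s ∧ x ∈ t) := by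
  unfold adjBlock
  exact exists_congr fun _ => and_congr_right fun _ =>
    List.exists_getElem!_succ_iff_exists_pair_infix
      (P := fun s t : Finset ℕ => x ∈ s ∧ y ∈ t ∨ y ∈ s ∧ x ∈ t)

theorem FMat_congr {m : ℕ} {σ τ : Assembly} (h : ∀ op, op ∈ σ ↔ op ∈ τ) :
    FMat m σ = FMat m τ := by
  have hsame : sameBlock σ = sameBlock τ := by
    ext x y
    simp only [sameBlock, h]
  have hadj : adjBlock σ = adjBlock τ := by
    ext x y
    simp only [adjBlock, h]
  unfold FMat
  rw [hsame, hadj]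

theorem FMat_eq_bottMatrix_of {m : ℕ} {σ : Assembly} {i : Fin m → ℤ}
    (hsame : ∀ j k : Fin m, sameBlock σ (j + 1) (k + 1) ↔ i j = i k)
    (hadj : ∀ j k : Fin m, adjBlock σ (j + 1) (k + 1) ↔ |i j - i k| = 1) :
    FMat m σ = bottMatrix m i := by
  ext j k
  simp only [FMat, bottMatrix, hsame, hadj]

def sortByMin (σ : Assembly) : Assembly :=
  σ.mergeSort (fun o₁ o₂ => (Uop o₁).min ≤ (Uop o₂).min)

theorem perm_sortByMin {σ : Assembly} : (sortByMin σ).Perm σ := List.mergeSort_perm _ _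

theorem pairwise_min_le_sortByMin (σ : Assembly) :
    (sortByMin σ).Pairwise (fun o₁ o₂ => (Uop o₁).min ≤ (Uop o₂).min) := by
  refine (List.pairwise_mergeSort (le := fun o₁ o₂ => (Uop o₁).min ≤ (Uop o₂).min)
    (fun _ _ _ h₁ h₂ => decide_eq_true ((of_decide_eq_true h₁).trans (of_decide_eq_true h₂)))
    (fun _ _ => ?_) σ).imp of_decide_eq_true
  simpa only [Bool.or_eq_true, decide_eq_true_eq] using le_total _ _

theorem min_lt_min_of_disjoint {s t : Finset ℕ} (hs : s.Nonempty) (hst : Disjoint s t)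
    (h : s.min ≤ t.min) : s.min < t.min := by
  refine h.lt_of_ne fun heq => ?_
  obtain ⟨a, ha⟩ := Finset.min_of_nonempty hs
  exact Finset.disjoint_left.mp hst (Finset.mem_of_min ha) (Finset.mem_of_min (heq ▸ ha))

theorem isAOP_sortByMin {n m : ℕ} {σ : Assembly}
    (hblocks : ∀ op ∈ σ, op ≠ [] ∧ ∀ b ∈ op, b.Nonempty)
    (hdisj : σ.flatten.Pairwise (fun s t => Disjoint s t))
    (hcover : σ.flatten.foldr (· ∪ ·) ∅ = Finset.Icc 1 m)
    (hbound : (σ.map List.length).sum + (σ.length - 1) ≤ n) :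
    IsAOP n m (sortByMin σ) := by
  have hperm := perm_sortByMin (σ := σ)
  have hblocks' : ∀ op ∈ sortByMin σ, op ≠ [] ∧ ∀ b ∈ op, b.Nonempty :=
    fun op hop => hblocks op (hperm.mem_iff.mp hop)
  have hdisj' : (sortByMin σ).flatten.Pairwise (fun s t => Disjoint s t) :=
    (hperm.flatten.pairwise_iff fun h => h.symm).mpr hdisj
  have hUop_nonempty : ∀ op ∈ sortByMin σ, (Uop op).Nonempty := by
    intro op hop
    obtain ⟨hne, hb⟩ := hblocks' op hop
    obtain ⟨x, hx⟩ := hb _ (List.head_mem hne)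
    exact ⟨x, mem_Uop.mpr ⟨_, List.head_mem hne, hx⟩⟩
  have hUop_disj : (sortByMin σ).Pairwise (fun o₁ o₂ => Disjoint (Uop o₁) (Uop o₂)) := by
    refine (List.pairwise_flatten.mp hdisj').2.imp fun h => Finset.disjoint_left.mpr ?_
    intro x hx₁ hx₂
    obtain ⟨b₁, hb₁, hxb₁⟩ := mem_Uop.mp hx₁
    obtain ⟨b₂, hb₂, hxb₂⟩ := mem_Uop.mp hx₂
    exact Finset.disjoint_left.mp (h b₁ hb₁ b₂ hb₂) hxb₁ hxb₂
  refine ⟨hblocks', hdisj', ?_, ?_, ?_⟩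
  · have : LeftCommutative (fun s t : Finset ℕ => s ∪ t) := ⟨Finset.union_left_comm⟩
    rw [hperm.flatten.foldr_eq, hcover]
  · exact ((pairwise_min_le_sortByMin σ).and hUop_disj).imp_of_mem
      fun h₁ _ ⟨hle, hd⟩ => min_lt_min_of_disjoint (hUop_nonempty _ h₁) hd hle
  · rwa [(hperm.map _).sum_eq, hperm.length_eq]

end Assembly

section Alpha

variable {m : ℕ} {i : Fin m → ℤ}

/-- The values `a_1 < ⋯ < a_t` of `i` from the definition of `α`. -/
def sortedValues (m : ℕ) (i : Fin m → ℤ) : List ℤ :=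
  (Finset.image i Finset.univ).sort (· ≤ ·)

theorem mem_sortedValues {v : ℤ} : v ∈ sortedValues m i ↔ ∃ j, i j = v := by
  simp [sortedValues]

theorem pairwise_lt_sortedValues : (sortedValues m i).Pairwise (· < ·) :=
  (Finset.sortedLT_sort _).pairwise

theorem alpha_eq_map_groupRuns :
    alpha m i = (groupRuns (sortedValues m i)).map (List.map (fiberSet m i)) := rfl

theorem mem_fiberSet {x : ℕ} {v : ℤ} :
    x ∈ fiberSet m i v ↔ ∃ j : Fin m, i j = v ∧ x = j + 1 := by
  simp [fiberSet, eq_comm]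

theorem succ_mem_fiberSet {j : Fin m} {v : ℤ} : (j : ℕ) + 1 ∈ fiberSet m i v ↔ i j = v := by
  simp [mem_fiberSet, Fin.val_inj]

theorem sameBlock_alpha_iff {j k : Fin m} :
    sameBlock (alpha m i) (j + 1) (k + 1) ↔ i j = i k := by
  simp only [sameBlock, alpha_eq_map_groupRuns, List.mem_map, exists_exists_and_eq_and,
    succ_mem_fiberSet]
  constructor
  · rintro ⟨g, -, v, -, hj, hk⟩
    rw [hj, hk]
  · intro h
    have hv : i j ∈ (groupRuns (sortedValues m i)).flatten := by
      rw [flatten_groupRuns]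
      exact mem_sortedValues.mpr ⟨j, rfl⟩
    obtain ⟨g, hg, hvg⟩ := List.mem_flatten.mp hv
    exact ⟨g, hg, i j, hvg, rfl, h.symm⟩

theorem adjBlock_alpha_iff {j k : Fin m} :
    adjBlock (alpha m i) (j + 1) (k + 1) ↔ |i j - i k| = 1 := by
  have hvals := pairwise_lt_sortedValues (i := i)
  rw [adjBlock_iff_exists_pair_infix, abs_eq zero_le_one]
  simp only [alpha_eq_map_groupRuns, List.mem_map, exists_exists_and_eq_and,
    List.exists_pair_infix_map_iff, succ_mem_fiberSet]
  have mem (j' : Fin m) : i j' ∈ sortedValues m i := mem_sortedValues.mpr ⟨j', rfl⟩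
  constructor
  · rintro ⟨g, hg, a, b, hab, h⟩
    have hba := ((exists_mem_groupRuns_pair_infix_iff hvals).mp ⟨g, hg, hab⟩).2.1
    omega
  · rintro (h | h)
    · obtain ⟨g, hg, hab⟩ :=
        (exists_mem_groupRuns_pair_infix_iff hvals).mpr ⟨mem k, by omega, mem j⟩
      exact ⟨g, hg, _, _, hab, Or.inr ⟨rfl, rfl⟩⟩
    · obtain ⟨g, hg, hab⟩ :=
        (exists_mem_groupRuns_pair_infix_iff hvals).mpr ⟨mem j, by omega, mem k⟩
      exact ⟨g, hg, _, _, hab, Or.inl ⟨rfl, rfl⟩⟩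

theorem FMat_alpha : FMat m (alpha m i) = bottMatrix m i :=
  FMat_eq_bottMatrix_of (fun _ _ => sameBlock_alpha_iff) (fun _ _ => adjBlock_alpha_iff)

theorem flatten_alpha : (alpha m i).flatten = (sortedValues m i).map (fiberSet m i) := by
  rw [alpha_eq_map_groupRuns, ← List.map_flatten, flatten_groupRuns]

theorem alpha_blocks_nonempty : ∀ op ∈ alpha m i, op ≠ [] ∧ ∀ b ∈ op, b.Nonempty := by
  simp only [alpha_eq_map_groupRuns, List.mem_map]
  rintro _ ⟨g, hg, rfl⟩
  refine ⟨by simpa using ne_nil_of_mem_groupRuns g hg, ?_⟩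
  intro b hb
  obtain ⟨v, hv, rfl⟩ := List.mem_map.mp hb
  obtain ⟨j, hj⟩ := mem_sortedValues.mp (mem_of_mem_groupRuns hg hv)
  exact ⟨j + 1, succ_mem_fiberSet.mpr hj⟩

theorem pairwise_disjoint_flatten_alpha :
    (alpha m i).flatten.Pairwise (fun s t => Disjoint s t) := by
  rw [flatten_alpha, List.pairwise_map]
  refine pairwise_lt_sortedValues.imp fun hvw => Finset.disjoint_left.mpr fun x hx hx' => ?_
  obtain ⟨j, rfl, rfl⟩ := mem_fiberSet.mp hx
  exact hvw.ne (succ_mem_fiberSet.mp hx')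

theorem foldr_union_flatten_alpha :
    (alpha m i).flatten.foldr (· ∪ ·) ∅ = Finset.Icc 1 m := by
  ext x
  simp only [flatten_alpha, mem_foldr_union, List.mem_map, Finset.mem_Icc]
  constructor
  · rintro ⟨_, ⟨v, -, rfl⟩, hx⟩
    obtain ⟨j, -, rfl⟩ := mem_fiberSet.mp hx
    omega
  · intro hx
    have hj : x - 1 < m := by omega
    refine ⟨_, ⟨_, mem_sortedValues.mpr ⟨⟨x - 1, hj⟩, rfl⟩, rfl⟩, mem_fiberSet.mpr ?_⟩
    exact ⟨⟨x - 1, hj⟩, rfl, (Nat.sub_add_cancel hx.1).symm⟩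

theorem sum_length_alpha_add_length_le {n : ℕ} (hi : ∀ t, i t ∈ Finset.Icc (1 : ℤ) n) :
    ((alpha m i).map List.length).sum + ((alpha m i).length - 1) ≤ n := by
  have hsum : ((alpha m i).map List.length).sum = (sortedValues m i).length := by
    rw [← List.length_flatten, flatten_alpha, List.length_map]
  rw [hsum, alpha_eq_map_groupRuns, List.length_map]
  rcases hvals : sortedValues m i with _ | ⟨a, L⟩
  · simp [groupRuns]
  have hval {v : ℤ} (hv : v ∈ a :: L) : 1 ≤ v ∧ v ≤ n := by
    obtain ⟨j, rfl⟩ := mem_sortedValues.mp (hvals ▸ hv)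
    simpa using hi j
  have hbound := length_add_length_groupRuns_le (hvals ▸ pairwise_lt_sortedValues)
    fun v hv => (hval hv).2
  have ha := (hval List.mem_cons_self).1
  obtain ⟨g, gs, hruns⟩ := groupRuns_cons_head a L
  rw [hruns] at hbound ⊢
  simp only [List.length_cons] at hbound ⊢
  omega

end Alpha

theorem F_alpha_eq_bottMatrix_general (n m : ℕ) :
    (∀ i : Fin m → ℤ, (∀ t, i t ∈ Finset.Icc (1 : ℤ) n) →
      FMat m (alpha m i) = bottMatrix m i) ∧
    (∀ B ∈ BSet n m, ∃ σ : Assembly, IsAOP n m σ ∧ FMat m σ = B) := by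
  refine ⟨fun i _ => FMat_alpha, ?_⟩
  rintro B ⟨i, hi, rfl⟩
  refine ⟨sortByMin (alpha m i), isAOP_sortByMin alpha_blocks_nonempty
    pairwise_disjoint_flatten_alpha foldr_union_flatten_alpha (sum_length_alpha_add_length_le hi), ?_⟩
  rw [FMat_congr fun _ => perm_sortByMin.mem_iff, FMat_alpha]

/-- `F(α(i)) = B_i` for every `i ∈ [n]^m`; consequently the map
`F : AOP(n,m) → B(n,m)` is surjective. -/
theorem F_alpha_eq_bottMatrix (n m : ℕ) (hn : 0 < n) (hm : 0 < m) :
    (∀ i : Fin m → ℤ, (∀ t, i t ∈ Finset.Icc (1 : ℤ) n) →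
      FMat m (alpha m i) = bottMatrix m i) ∧
    (∀ B ∈ BSet n m, ∃ σ : Assembly, IsAOP n m σ ∧ FMat m σ = B) :=
  F_alpha_eq_bottMatrix_general n m
end

section
/- b(2,m) = 2^{m-1} for all m ≥ 1, where b(n,m) is the number of distinct Bott matrices of BS type arising from sequences in [n]^m. -/
lemma bottMatrix_apply_eq_neg_two_iff {m : ℕ} (i : Fin m → ℤ) {j k : Fin m} (hkj : k < j) :
    bottMatrix m i j k = -2 ↔ i j = i k := by
  simp only [bottMatrix, hkj.ne', hkj, if_false, if_true]
  split_ifs <;> simp_all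

section TwoValued

variable {m : ℕ} {i i' : Fin m → ℤ}

lemma abs_sub_eq_one_iff_ne_of_mem_Icc {a b : ℤ} (ha : a ∈ Finset.Icc 1 2)
    (hb : b ∈ Finset.Icc 1 2) : |a - b| = 1 ↔ a ≠ b := by
  rw [Finset.mem_Icc] at ha hb
  rw [abs_eq zero_le_one]
  omega

lemma eq_iff_eq_iff_eq_of_mem_Icc {a b c : ℤ} (ha : a ∈ Finset.Icc 1 2)
    (hb : b ∈ Finset.Icc 1 2) (hc : c ∈ Finset.Icc 1 2) : a = b ↔ (a = c ↔ b = c) := by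
  rw [Finset.mem_Icc] at ha hb hc
  omega

lemma bottMatrix_eq_bottMatrix_iff [NeZero m] (hi : ∀ t, i t ∈ Finset.Icc (1 : ℤ) 2)
    (hi' : ∀ t, i' t ∈ Finset.Icc (1 : ℤ) 2) :
    bottMatrix m i = bottMatrix m i' ↔ ∀ t, (i t = i 0 ↔ i' t = i' 0) := by
  constructor
  · intro h t
    rcases (Fin.zero_le t).eq_or_lt with rfl | ht
    · simp
    · rw [← bottMatrix_apply_eq_neg_two_iff i ht, ← bottMatrix_apply_eq_neg_two_iff i' ht, h]
  · intro h
    have hpattern : ∀ j k, i j = i k ↔ i' j = i' k := fun j k => by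
      rw [eq_iff_eq_iff_eq_of_mem_Icc (hi j) (hi k) (hi 0),
        eq_iff_eq_iff_eq_of_mem_Icc (hi' j) (hi' k) (hi' 0), h j, h k]
    ext j k
    simp only [bottMatrix, abs_sub_eq_one_iff_ne_of_mem_Icc (hi j) (hi k),
      abs_sub_eq_one_iff_ne_of_mem_Icc (hi' j) (hi' k), ne_eq, hpattern]

variable [NeZero m]

lemma BSet_two_eq_image :
    BSet 2 m = bottMatrix m '' {i | (∀ t, i t ∈ Finset.Icc (1 : ℤ) 2) ∧ i 0 = 1} := by
  ext B
  simp only [BSet, Nat.cast_ofNat, Set.mem_ofPred_eq, Set.mem_image]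
  constructor
  · rintro ⟨i, hi, rfl⟩
    have hnorm : ∀ t, (if i t = i 0 then 1 else 2 : ℤ) ∈ Finset.Icc (1 : ℤ) 2 := fun t => by
      split_ifs <;> decide
    refine ⟨fun t => if i t = i 0 then 1 else 2, ⟨hnorm, by simp⟩, ?_⟩
    rw [bottMatrix_eq_bottMatrix_iff hnorm hi]
    intro t
    split_ifs <;> simp_all
  · rintro ⟨i, ⟨hi, -⟩, rfl⟩
    exact ⟨i, hi, rfl⟩

lemma injOn_bottMatrix_two :
    Set.InjOn (bottMatrix m) {i | (∀ t, i t ∈ Finset.Icc (1 : ℤ) 2) ∧ i 0 = 1} := by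
  rintro i ⟨hi, hi0⟩ i' ⟨hi', hi'0⟩ h
  rw [bottMatrix_eq_bottMatrix_iff hi hi'] at h
  funext t
  have hit := Finset.mem_Icc.mp (hi t)
  have hi't := Finset.mem_Icc.mp (hi' t)
  have := h t
  omega

end TwoValued

lemma ncard_two_valued_starting_one (n : ℕ) :
    {i : Fin (n + 1) → ℤ | (∀ t, i t ∈ Finset.Icc (1 : ℤ) 2) ∧ i 0 = 1}.ncard = 2 ^ n := by
  have hpi : {i : Fin (n + 1) → ℤ | (∀ t, i t ∈ Finset.Icc (1 : ℤ) 2) ∧ i 0 = 1} =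
      ↑(Fintype.piFinset fun t : Fin (n + 1) => if t = 0 then {1} else Finset.Icc (1 : ℤ) 2) := by
    ext i
    simp only [Set.mem_ofPred_eq, Fintype.coe_piFinset, Set.mem_pi,
      Set.mem_univ, true_implies, Finset.mem_coe]
    constructor
    · rintro ⟨hi, hi0⟩ t
      split_ifs with ht <;> simp_all
    · intro hi
      have hi0 := hi 0
      simp only [if_true, Finset.mem_singleton] at hi0
      refine ⟨fun t => ?_, hi0⟩
      by_cases ht : t = 0
      · simp [ht, hi0]
      · simpa [ht] using hi t
  rw [hpi, Set.ncard_coe_finset, Fintype.card_piFinset, Fin.prod_univ_succ]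
  simp [Fin.succ_ne_zero]

/-- `b(2,m) = 2^(m-1)` for all `m ≥ 1`. -/
theorem card_BSet_two (m : ℕ) (hm : 1 ≤ m) :
    (BSet 2 m).ncard = 2 ^ (m - 1) := by
  obtain ⟨n, rfl⟩ := Nat.exists_eq_add_of_le' hm
  rw [BSet_two_eq_image, injOn_bottMatrix_two.ncard_image,
    ncard_two_valued_starting_one, Nat.add_sub_cancel]
end
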